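/- arXiv:2309.01149 — 5 statements merged into one kernel-verified Lean document; each statement's English description precedes it below -/
import Mathlib

section
/- Let c be a symmetric nonnegative cost function on a set V. Let G_n be a collection of n ≥ 2 clusters and g_{n+1} an additional nonempty cluster. Define min(g_{n+1}, G_n) = min over p_i in (the union of points of) G_n and p_k in g_{n+1} of c(p_i, p_k), and max(G_n) = max over distinct p_i, p_j in G_n of c(p_i, p_j). If T*_n is an optimal GTSP tour over G_n and T*_{n+1} is an optimal GTSP tour over G_n ∪ {g_{n+1}}, then c(T*_{n+1}) ≥ c(T*_n) + 2·min(g_{n+1}, G_n) − max(G_n). (This inequality holds without assuming the triangle inequality.) -/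
/-- Cyclic cost of a tour. -/
def cycCost {V : Type*} (c : V → V → ℝ) {k : ℕ} [NeZero k] (p : Fin k → V) : ℝ :=
  ∑ i, c (p i) (p (i + 1))

/-- `p` is a generalized TSP tour over the clusters `Gs`. -/
def IsGTour {V : Type*} {k : ℕ} (Gs : Fin k → Finset V) (p : Fin k → V) : Prop :=
  ∃ σ : Equiv.Perm (Fin k), ∀ i, p i ∈ Gs (σ i)

lemma cycCost_rot {V : Type*} (c : V → V → ℝ) {k : ℕ} [NeZero k] (p : Fin k → V) (t : Fin k) :
    cycCost c (fun i => p (i + t)) = cycCost c p := by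
  unfold cycCost
  refine Fintype.sum_equiv (Equiv.addRight t) _ _ (fun i => ?_)
  simp only [Equiv.coe_addRight]
  rw [add_right_comm]

lemma cycCost_drop {V : Type*} (c : V → V → ℝ) {m : ℕ} (w : Fin (m + 3) → V) :
    cycCost c w = cycCost c (fun i : Fin (m + 2) => w i.castSucc)
      + (c (w ((Fin.last (m + 1)).castSucc)) (w (Fin.last (m + 2)))
        + c (w (Fin.last (m + 2))) (w 0)
        - c (w ((Fin.last (m + 1)).castSucc)) (w 0)) := by
  unfold cycCost
  rw [Fin.sum_univ_castSucc (f := fun i : Fin (m + 2 + 1) => c (w i) (w (i + 1)))]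
  rw [Fin.sum_univ_castSucc
    (f := fun i : Fin (m + 1 + 1) => c (w i.castSucc) (w (i.castSucc + 1)))]
  rw [Fin.sum_univ_castSucc
    (f := fun i : Fin (m + 1 + 1) => c (w i.castSucc) (w ((i + 1 : Fin (m + 2)).castSucc)))]
  have key : ∀ i : Fin (m + 1),
      ((i.castSucc + 1 : Fin (m + 2))).castSucc = i.castSucc.castSucc + 1 := by
    intro i
    rw [Fin.coeSucc_eq_succ, Fin.coeSucc_eq_succ, Fin.succ_castSucc]
  have e3 : ((Fin.last (m + 1)).castSucc + 1 : Fin (m + 3)) = Fin.last (m + 2) := by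
    rw [Fin.coeSucc_eq_succ, Fin.succ_last]
  have e4 : (Fin.last (m + 2) + 1 : Fin (m + 3)) = 0 := Fin.last_add_one _
  have e5 : ((Fin.last (m + 1) + 1 : Fin (m + 2))).castSucc = (0 : Fin (m + 3)) := by
    rw [Fin.last_add_one, Fin.castSucc_zero]
  simp only [key, e3, e4, e5]
  ring

/-- Without assuming the triangle inequality:
`c(T*_{n+1}) ≥ c(T*_n) + 2·min(g_{n+1}, G_n) − max(G_n)`,
where the clusters of `G_n` (at least two of them) are finite, nonempty and pairwise
disjoint, `g_{n+1}` is a nonempty additional cluster, `mmin` is the minimum cost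
between a point of `G_n` and a point of `g_{n+1}`, and `mmax` is the maximum cost
between two distinct points of `G_n`. -/
theorem stmt2 {V : Type*} [DecidableEq V] (c : V → V → ℝ)
    (hsymm : ∀ u v, c u v = c v u) (hnonneg : ∀ u v, 0 ≤ c u v)
    (n : ℕ) (Gs : Fin (n + 2) → Finset V) (g : Finset V)
    (hGne : ∀ i, (Gs i).Nonempty) (hgne : g.Nonempty)
    (hdisj : ∀ i j, i ≠ j → Disjoint (Gs i) (Gs j))
    (hdisj' : ∀ i, Disjoint (Gs i) g)
    (mmin mmax : ℝ)
    (hmin : IsLeast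
      {x : ℝ | ∃ p ∈ Finset.univ.biUnion Gs, ∃ q ∈ g, x = c p q} mmin)
    (hmax : IsGreatest
      {x : ℝ | ∃ p ∈ Finset.univ.biUnion Gs, ∃ q ∈ Finset.univ.biUnion Gs,
        p ≠ q ∧ x = c p q} mmax)
    (T : Fin (n + 2) → V) (T' : Fin (n + 3) → V)
    (hT : IsGTour Gs T)
    (hTopt : ∀ p, IsGTour Gs p → cycCost c T ≤ cycCost c p)
    (hT' : IsGTour (Fin.snoc Gs g) T')
    (hT'opt : ∀ p, IsGTour (Fin.snoc Gs g) p → cycCost c T' ≤ cycCost c p) :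
    cycCost c T + 2 * mmin - mmax ≤ cycCost c T' := by
  obtain ⟨σ', hσ'⟩ := hT'
  set t : Fin (n + 3) := σ'.symm (Fin.last (n + 2)) - Fin.last (n + 2) with ht
  set T'' : Fin (n + 3) → V := fun i => T' (i + t) with hT''def
  have hcost'' : cycCost c T'' = cycCost c T' := cycCost_rot c T' t
  set σ'' : Fin (n + 3) → Fin (n + 3) := fun i => σ' (i + t) with hσ''def
  have hσ''inj : Function.Injective σ'' := fun a b hab =>
    add_right_cancel (σ'.injective hab)
  have hmem'' : ∀ i, T'' i ∈ (Fin.snoc Gs g : Fin (n + 3) → Finset V) (σ'' i) := by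
    intro i
    simp only [hT''def, hσ''def]
    exact hσ' (i + t)
  have hlastt : Fin.last (n + 2) + t = σ'.symm (Fin.last (n + 2)) := by
    rw [ht]; abel
  have hlast : σ'' (Fin.last (n + 2)) = Fin.last (n + 2) := by
    rw [hσ''def]; simp only [hlastt, Equiv.apply_symm_apply]
  have hne : ∀ i : Fin (n + 2), σ'' i.castSucc ≠ Fin.last (n + 2) := by
    intro i h
    rw [← hlast] at h
    exact (Fin.castSucc_lt_last i).ne (hσ''inj h)
  set σfun : Fin (n + 2) → Fin (n + 2) := fun i => (σ'' i.castSucc).castPred (hne i)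
    with hσfundef
  have hσfuninj : Function.Injective σfun := by
    intro a b hab
    have h2 : σ'' a.castSucc = σ'' b.castSucc := by
      have := congrArg Fin.castSucc hab
      simpa only [hσfundef, Fin.castSucc_castPred] using this
    exact Fin.castSucc_injective _ (hσ''inj h2)
  set p : Fin (n + 2) → V := fun i => T'' i.castSucc with hpdef
  have hpmem : ∀ i, p i ∈ Gs (σfun i) := by
    intro i
    have h := hmem'' i.castSucc
    rwa [← Fin.castSucc_castPred _ (hne i), Fin.snoc_castSucc] at h
  have hptour : IsGTour Gs p :=
    ⟨Equiv.ofBijective σfun ((Finite.injective_iff_bijective).1 hσfuninj), hpmem⟩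
  set u : V := T'' ((Fin.last (n + 1)).castSucc) with hudef
  set q : V := T'' (Fin.last (n + 2)) with hqdef
  set v : V := T'' 0 with hvdef
  have hcosteq : cycCost c T'' = cycCost c p + (c u q + c q v - c u v) :=
    cycCost_drop c T''
  -- memberships
  have hu : u ∈ Finset.univ.biUnion Gs :=
    Finset.mem_biUnion.2 ⟨σfun (Fin.last (n + 1)), Finset.mem_univ _,
      hpmem (Fin.last (n + 1))⟩
  have hv0 : v = p 0 := by simp only [hpdef, hvdef, Fin.castSucc_zero]
  have hv : v ∈ Finset.univ.biUnion Gs := by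
    rw [hv0]
    exact Finset.mem_biUnion.2 ⟨σfun 0, Finset.mem_univ _, hpmem 0⟩
  have hq : q ∈ g := by
    have h := hmem'' (Fin.last (n + 2))
    rwa [hlast, Fin.snoc_last] at h
  have hlne0 : (Fin.last (n + 1) : Fin (n + 2)) ≠ 0 := by
    simp [Fin.ext_iff]
  have huv : u ≠ v := by
    intro h
    have hσne : σfun (Fin.last (n + 1)) ≠ σfun 0 := fun h' => hlne0 (hσfuninj h')
    have hd := hdisj _ _ hσne
    have hu' : u ∈ Gs (σfun (Fin.last (n + 1))) := hpmem (Fin.last (n + 1))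
    have hv' : v ∈ Gs (σfun 0) := by rw [hv0]; exact hpmem 0
    rw [h] at hu'
    exact Finset.disjoint_left.1 hd hu' hv'
  have h1 : mmin ≤ c u q := hmin.2 ⟨u, hu, q, hq, rfl⟩
  have h2 : mmin ≤ c q v := by
    rw [hsymm]; exact hmin.2 ⟨v, hv, q, hq, rfl⟩
  have h3 : c u v ≤ mmax := hmax.2 ⟨u, hu, v, hv, huv, rfl⟩
  have h4 : cycCost c T ≤ cycCost c p := hTopt p hptour
  linarith [hcost''.symm.trans hcosteq]
end

section
/- Combining the two preceding facts: under the triangle inequality, c(T*_{n+1}) ≥ max{ c(T*_n) + 2·min(g_{n+1}, G_n) − max(G_n), c(T*_n) }. -/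
/-- Under the triangle inequality:
`c(T*_{n+1}) ≥ max { c(T*_n) + 2·min(g_{n+1}, G_n) − max(G_n), c(T*_n) }`. -/
theorem stmt3 {V : Type*} [DecidableEq V] (c : V → V → ℝ)
    (hsymm : ∀ u v, c u v = c v u) (hnonneg : ∀ u v, 0 ≤ c u v)
    (htri : ∀ u v w, c u w ≤ c u v + c v w)
    (n : ℕ) (Gs : Fin (n + 2) → Finset V) (g : Finset V)
    (hGne : ∀ i, (Gs i).Nonempty) (hgne : g.Nonempty)
    (hdisj : ∀ i j, i ≠ j → Disjoint (Gs i) (Gs j))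
    (hdisj' : ∀ i, Disjoint (Gs i) g)
    (mmin mmax : ℝ)
    (hmin : IsLeast
      {x : ℝ | ∃ p ∈ Finset.univ.biUnion Gs, ∃ q ∈ g, x = c p q} mmin)
    (hmax : IsGreatest
      {x : ℝ | ∃ p ∈ Finset.univ.biUnion Gs, ∃ q ∈ Finset.univ.biUnion Gs,
        p ≠ q ∧ x = c p q} mmax)
    (T : Fin (n + 2) → V) (T' : Fin (n + 3) → V)
    (hT : IsGTour Gs T)
    (hTopt : ∀ p, IsGTour Gs p → cycCost c T ≤ cycCost c p)
    (hT' : IsGTour (Fin.snoc Gs g) T')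
    (hT'opt : ∀ p, IsGTour (Fin.snoc Gs g) p → cycCost c T' ≤ cycCost c p) :
    max (cycCost c T + 2 * mmin - mmax) (cycCost c T) ≤ cycCost c T' := by
  obtain ⟨σ', hσ'⟩ := hT'
  set d : Fin (n+3) := σ'.symm (Fin.last (n+2)) + 1 with hd
  set q : Fin (n+3) → V := fun j => T' (j + d) with hq
  have hrot : cycCost c q = cycCost c T' := by
    unfold cycCost
    rw [← Equiv.sum_comp (Equiv.addRight d) (fun i => c (T' i) (T' (i + 1)))]
    refine Finset.sum_congr rfl fun j _ => ?_
    simp only [hq, Equiv.coe_addRight]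
    congr 1
    rw [add_right_comm]
  set σ : Equiv.Perm (Fin (n+3)) := (Equiv.addRight d).trans σ' with hσdef
  have hqmem : ∀ j, q j ∈ (Fin.snoc Gs g : Fin (n+3) → Finset V) (σ j) := by
    intro j
    show T' (j + d) ∈ (Fin.snoc Gs g : Fin (n+3) → Finset V) (σ' (j + d))
    exact hσ' _
  have hσlast : σ (Fin.last (n+2)) = Fin.last (n+2) := by
    show σ' (Fin.last (n+2) + d) = _
    have h0 : Fin.last (n+2) + d = σ'.symm (Fin.last (n+2)) := by
      rw [hd, add_comm (σ'.symm (Fin.last (n+2))) 1, ← add_assoc, Fin.last_add_one, zero_add]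
    rw [h0, Equiv.apply_symm_apply]
  have hvg : q (Fin.last (n+2)) ∈ g := by
    have := hqmem (Fin.last (n+2))
    rwa [hσlast, Fin.snoc_last] at this
  have hne : ∀ j : Fin (n+2), σ j.castSucc ≠ Fin.last (n+2) := by
    intro j h
    exact (Fin.castSucc_lt_last j).ne (σ.injective (h.trans hσlast.symm))
  set f : Fin (n+2) → Fin (n+2) := fun j => (σ j.castSucc).castPred (hne j) with hf
  have hfinj : Function.Injective f := by
    intro a b hab
    have h2 : σ a.castSucc = σ b.castSucc := by
      rw [← Fin.castSucc_castPred _ (hne a), ← Fin.castSucc_castPred _ (hne b)]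
      exact congrArg Fin.castSucc hab
    exact Fin.castSucc_injective _ (σ.injective h2)
  set p : Fin (n+2) → V := fun m => q m.castSucc with hp
  have hpmem : ∀ m, p m ∈ Gs (f m) := by
    intro m
    have := hqmem m.castSucc
    rwa [← Fin.castSucc_castPred _ (hne m), Fin.snoc_castSucc] at this
  have hptour : IsGTour Gs p :=
    ⟨Equiv.ofBijective f ((Finite.injective_iff_bijective).mp hfinj), hpmem⟩
  set u := q ((Fin.last (n+1)).castSucc) with hu
  set v := q (Fin.last (n+2)) with hv
  set w := q 0 with hw
  have key1 : (Fin.last (n+1)).castSucc + 1 = Fin.last (n+2) := by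
    rw [Fin.ext_iff, Fin.val_add_one_of_lt (Fin.castSucc_lt_last _)]
    simp
  have hq_eq : cycCost c q =
      (∑ j : Fin (n+1), c (q j.castSucc.castSucc) (q (j.castSucc.castSucc + 1)))
        + c u v + c v w := by
    unfold cycCost
    rw [Fin.sum_univ_castSucc (f := fun i => c (q i) (q (i + 1))),
      Fin.sum_univ_castSucc (f := fun j : Fin (n+2) => c (q j.castSucc) (q (j.castSucc + 1))),
      Fin.last_add_one, key1]
  have hcast : ∀ j : Fin (n+1), ((j.castSucc + 1 : Fin (n+2))).castSucc
      = j.castSucc.castSucc + 1 := by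
    intro j
    rw [Fin.ext_iff, Fin.coe_castSucc, Fin.val_add_one_of_lt (Fin.castSucc_lt_last _),
      Fin.val_add_one_of_lt (Fin.castSucc_lt_last _)]
    simp
  have hp_eq : cycCost c p =
      (∑ j : Fin (n+1), c (q j.castSucc.castSucc) (q (j.castSucc.castSucc + 1)))
        + c u w := by
    unfold cycCost
    rw [Fin.sum_univ_castSucc (f := fun m : Fin (n+2) => c (p m) (p (m + 1))),
      Fin.last_add_one]
    have hlt : c (p (Fin.last (n+1))) (p 0) = c u w := by
      simp only [hp, hu, hw, Fin.castSucc_zero]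
    rw [hlt]
    congr 1
    refine Finset.sum_congr rfl fun j _ => ?_
    simp only [hp]
    rw [hcast j]
  have humem : u ∈ Finset.univ.biUnion Gs :=
    Finset.mem_biUnion.mpr ⟨f (Fin.last (n+1)), Finset.mem_univ _, hpmem (Fin.last (n+1))⟩
  have hwmem : w ∈ Finset.univ.biUnion Gs := by
    have := hpmem 0
    exact Finset.mem_biUnion.mpr ⟨f 0, Finset.mem_univ _, by simpa [hp, hw] using this⟩
  have huw : u ≠ w := by
    intro h
    have hfne : f (Fin.last (n+1)) ≠ f 0 := fun he => by
      have := hfinj he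
      simp [Fin.ext_iff] at this
    have hd2 := hdisj _ _ hfne
    have h1 := hpmem (Fin.last (n+1))
    have h2 := hpmem 0
    rw [show p (Fin.last (n+1)) = u from rfl] at h1
    rw [show p 0 = q (Fin.castSucc 0) from rfl, Fin.castSucc_zero, ← hw] at h2
    rw [h] at h1
    exact (Finset.disjoint_left.mp hd2) h1 h2
  have h1 : mmin ≤ c u v := hmin.2 ⟨u, humem, v, hvg, rfl⟩
  have h2 : mmin ≤ c v w := by
    rw [hsymm]; exact hmin.2 ⟨w, hwmem, v, hvg, rfl⟩
  have h3 : c u w ≤ mmax := hmax.2 ⟨u, humem, w, hwmem, huw, rfl⟩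
  have h4 : c u w ≤ c u v + c v w := htri u v w
  have h5 : cycCost c T ≤ cycCost c p := hTopt p hptour
  rw [← hrot, max_le_iff]
  constructor <;> linarith
end

section
/- Let d_1, ..., d_{N_A} be nonnegative reals, d̄ = max_k d_k, Δ = Σ_k ⌊d̄ − d_k⌋, and m a nonnegative integer with m > Δ. Then the optimal value of minimizing max_k (d_k + n_k) over nonnegative integers n_1,...,n_{N_A} with Σ_k n_k = m equals min over j = 1,...,N_A of ( d_j + ⌈ (m + Σ_{k=1}^{N_A} ⌈d_k − d_j⌉) / N_A ⌉ ). -/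
/-!
Write `c_j = ⌈(m + Σ_k ⌈d_k - d_j⌉) / N⌉`. If agent `j` carries the maximal load of an assignment
`n`, then `⌈d_k - d_j⌉ ≤ n_j - n_k` for every `k`, and summing over `k` gives `c_j ≤ n_j`; hence
every assignment has maximal load at least `min_j (d_j + c_j)`. Conversely, for any `j` the caps
`c_j - ⌈d_k - d_j⌉` sum to `N c_j - Σ_k ⌈d_k - d_j⌉ ≥ m`, and the hypothesis `m > Δ` makes them
nonnegative, so `m` tasks fit below them and no load then exceeds `d_j + c_j`.
-/

open Finset

lemma Int.ceil_intCast_div_natCast_le_iff {a n : ℤ} {N : ℕ} (hN : 0 < N) :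
    ⌈(a : ℝ) / N⌉ ≤ n ↔ a ≤ N * n := by
  rw [Int.ceil_le, div_le_iff₀ (by positivity), mul_comm]
  exact_mod_cast Iff.rfl

variable {ι : Type*} [Fintype ι]

lemma exists_le_sum_eq (c : ι → ℕ) {m : ℕ} (h : m ≤ ∑ k, c k) :
    ∃ n : ι → ℕ, n ≤ c ∧ ∑ k, n k = m := by
  classical
  induction m with
  | zero => exact ⟨0, fun _ => Nat.zero_le _, by simp⟩
  | succ m ih =>
    obtain ⟨n, hnc, hsum⟩ := ih (Nat.le_of_succ_le h)
    obtain ⟨k, -, hk⟩ := exists_lt_of_sum_lt (s := univ) (hsum ▸ h : ∑ k, n k < ∑ k, c k)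
    refine ⟨Function.update n k (n k + 1), fun i => ?_, ?_⟩
    · rcases eq_or_ne i k with rfl | hik
      · simpa using hk
      · simpa [Function.update_of_ne hik] using hnc i
    · rw [sum_update_of_mem (mem_univ k), sdiff_singleton_eq_erase,
        ← add_sum_erase univ n (mem_univ k)] at *
      omega

/-- The number of tasks agent `j` receives in the candidate optimum with `j` as bottleneck. -/
noncomputable def ceilShare (d : ι → ℝ) (m : ℕ) (j : ι) : ℤ :=
  ⌈((m + ∑ k, ⌈d k - d j⌉ : ℤ) : ℝ) / Fintype.card ι⌉

lemma ceilShare_le_iff {d : ι → ℝ} {m : ℕ} {j : ι} {n : ℤ} :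
    ceilShare d m j ≤ n ↔ m + ∑ k, ⌈d k - d j⌉ ≤ Fintype.card ι * n :=
  Int.ceil_intCast_div_natCast_le_iff (Fintype.card_pos_iff.mpr ⟨j⟩)

lemma ceilShare_le_of_forall_le {d : ι → ℝ} {n : ι → ℕ} {j : ι}
    (hj : ∀ k, d k + n k ≤ d j + n j) : ceilShare d (∑ k, n k) j ≤ n j := by
  have hgap (k : ι) : ⌈d k - d j⌉ ≤ (n j : ℤ) - n k := by
    rw [Int.ceil_le]; push_cast; linarith [hj k]
  have := sum_le_sum fun k (_ : k ∈ univ) => hgap k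
  rw [sum_sub_distrib, sum_const, card_univ, nsmul_eq_mul] at this
  rw [ceilShare_le_iff]
  push_cast
  linarith

lemma ceil_sub_le_ceilShare {d : ι → ℝ} {m : ℕ} (dbar : ℝ)
    (hm : ∑ k, ⌊dbar - d k⌋ < (m : ℤ)) (j : ι) : ⌈dbar - d j⌉ ≤ ceilShare d m j := by
  have hgap (k : ι) : ⌈dbar - d j⌉ - 1 ≤ ⌊dbar - d k⌋ + ⌈d k - d j⌉ := by
    have := Int.ceil_add_le (dbar - d k) (d k - d j)
    have := Int.ceil_le_floor_add_one (dbar - d k)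
    rw [sub_add_sub_cancel] at *
    omega
  have := sum_le_sum fun k (_ : k ∈ univ) => hgap k
  rw [sum_const, card_univ, nsmul_eq_mul, sum_add_distrib] at this
  rw [← Int.sub_one_lt_iff, ← not_le, ceilShare_le_iff]
  linarith

lemma exists_sum_eq_forall_add_le_ceilShare {d : ι → ℝ} {m : ℕ} {dbar : ℝ}
    (hdbar : ∀ k, d k ≤ dbar) (hm : ∑ k, ⌊dbar - d k⌋ < (m : ℤ)) (j : ι) :
    ∃ n : ι → ℕ, ∑ k, n k = m ∧ ∀ k, d k + n k ≤ d j + ceilShare d m j := by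
  set cap : ι → ℕ := fun k => (ceilShare d m j - ⌈d k - d j⌉).toNat
  have hcap (k : ι) : (cap k : ℤ) = ceilShare d m j - ⌈d k - d j⌉ := by
    have := Int.ceil_le_ceil (sub_le_sub_right (hdbar k) (d j))
    have := ceil_sub_le_ceilShare dbar hm j
    simp only [cap]
    omega
  have hsum_cap : m ≤ ∑ k, cap k := by
    have := ceilShare_le_iff.mp (le_refl (ceilShare d m j))
    have : ((∑ k, cap k : ℕ) : ℤ) = Fintype.card ι * ceilShare d m j - ∑ k, ⌈d k - d j⌉ := by
      simp only [Nat.cast_sum, hcap, sum_sub_distrib, sum_const, card_univ, nsmul_eq_mul]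
    omega
  obtain ⟨n, hn, hsum⟩ := exists_le_sum_eq cap hsum_cap
  refine ⟨n, hsum, fun k => ?_⟩
  have hnk : ((n k : ℤ) : ℝ) ≤ ((cap k : ℤ) : ℝ) := by exact_mod_cast hn k
  rw [hcap k] at hnk
  push_cast at hnk
  linarith [Int.le_ceil (d k - d j)]

lemma inf'_add_ceilShare_le_sup' (hne : (univ : Finset ι).Nonempty) (d : ι → ℝ) (n : ι → ℕ) :
    univ.inf' hne (fun j => d j + ceilShare d (∑ k, n k) j) ≤
      univ.sup' hne (fun k => d k + n k) := by
  obtain ⟨j, -, hj⟩ := exists_mem_eq_sup' hne (fun k => d k + (n k : ℝ))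
  have hmax (k : ι) : d k + n k ≤ d j + n j := hj ▸ le_sup' (fun k => d k + (n k : ℝ)) (mem_univ k)
  calc univ.inf' hne (fun j => d j + ceilShare d (∑ k, n k) j)
      ≤ d j + ceilShare d (∑ k, n k) j := inf'_le _ (mem_univ j)
    _ ≤ d j + n j := by
        gcongr
        exact_mod_cast ceilShare_le_of_forall_le hmax
    _ = _ := hj.symm

theorem stmt5_general (N : ℕ) (hN : 0 < N) (d : Fin N → ℝ) (m : ℕ)
    (dbar : ℝ) (hdbar : IsGreatest (Set.range d) dbar)
    (hm : (∑ k, ⌊dbar - d k⌋) < (m : ℤ)) :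
    IsLeast
      {x : ℝ | ∃ nv : Fin N → ℕ, (∑ k, nv k) = m ∧
        x = Finset.univ.sup' ⟨⟨0, hN⟩, Finset.mem_univ _⟩
          (fun k => d k + (nv k : ℝ))}
      (Finset.univ.inf' ⟨⟨0, hN⟩, Finset.mem_univ _⟩
        (fun j => d j +
          ((⌈((m : ℝ) + ∑ k, ((⌈d k - d j⌉ : ℤ) : ℝ)) / (N : ℝ)⌉ : ℤ) : ℝ))) := by
  have hne : (univ : Finset (Fin N)).Nonempty := ⟨⟨0, hN⟩, mem_univ _⟩
  have hshare : (fun j => d j + ((⌈((m : ℝ) + ∑ k, ((⌈d k - d j⌉ : ℤ) : ℝ)) / (N : ℝ)⌉ : ℤ) : ℝ))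
      = fun j => d j + ceilShare d m j := by
    simp [ceilShare]
  rw [hshare]
  refine ⟨?_, ?_⟩
  · obtain ⟨j, -, hj⟩ := exists_mem_eq_inf' hne (fun j => d j + (ceilShare d m j : ℝ))
    obtain ⟨n, rfl, hn⟩ :=
      exists_sum_eq_forall_add_le_ceilShare (fun k => hdbar.2 ⟨k, rfl⟩) hm j
    refine ⟨n, rfl, le_antisymm (inf'_add_ceilShare_le_sup' hne d n) ?_⟩
    exact hj ▸ sup'_le hne _ fun k _ => hn k
  · rintro x ⟨n, rfl, rfl⟩
    exact inf'_add_ceilShare_le_sup' hne d n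

/-- Closed-form solution of the relaxed min-max load balancing problem in the case
`m > Δ`: the optimal value of minimizing `max_k (d_k + n_k)` over nonnegative
integers `n_k` with `Σ_k n_k = m` equals
`min_j ( d_j + ⌈ (m + Σ_k ⌈d_k − d_j⌉) / N ⌉ )`. -/
theorem stmt5 (N : ℕ) (hN : 0 < N) (d : Fin N → ℝ) (hd : ∀ k, 0 ≤ d k) (m : ℕ)
    (dbar : ℝ) (hdbar : IsGreatest (Set.range d) dbar)
    (hm : (∑ k, ⌊dbar - d k⌋) < (m : ℤ)) :
    IsLeast
      {x : ℝ | ∃ nv : Fin N → ℕ, (∑ k, nv k) = m ∧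
        x = Finset.univ.sup' ⟨⟨0, hN⟩, Finset.mem_univ _⟩
          (fun k => d k + (nv k : ℝ))}
      (Finset.univ.inf' ⟨⟨0, hN⟩, Finset.mem_univ _⟩
        (fun j => d j +
          ((⌈((m : ℝ) + ∑ k, ((⌈d k - d j⌉ : ℤ) : ℝ)) / (N : ℝ)⌉ : ℤ) : ℝ))) :=
  stmt5_general N hN d m dbar hdbar hm
end

section
/- The greedy algorithm that assigns m identical unit-time tasks one at a time, each time to an agent with currently smallest load, produces an assignment (n_1,...,n_{N_A}) minimizing max_k (d_k + n_k) over all nonnegative integer vectors with Σ_k n_k = m. -/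
/-- The greedy algorithm that assigns `m` identical unit-time tasks one at a time,
each time to an agent with currently smallest load (ties broken arbitrarily),
minimizes `max_k (d_k + n_k)` over all nonnegative integer vectors with `Σ_k n_k = m`. -/
theorem stmt6 (N : ℕ) (hN : 0 < N) (d : Fin N → ℝ) (hd : ∀ k, 0 ≤ d k)
    (a : ℕ → Fin N → ℕ) (h0 : a 0 = fun _ => 0)
    (hstep : ∀ t, ∃ k : Fin N,
      (∀ j, d k + (a t k : ℝ) ≤ d j + (a t j : ℝ)) ∧
      a (t + 1) = Function.update (a t) k (a t k + 1))
    (m : ℕ) (x : Fin N → ℕ) (hx : ∑ k, x k = m) :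
    Finset.univ.sup' ⟨⟨0, hN⟩, Finset.mem_univ _⟩ (fun k => d k + (a m k : ℝ)) ≤
      Finset.univ.sup' ⟨⟨0, hN⟩, Finset.mem_univ _⟩ (fun k => d k + (x k : ℝ)) := by
  classical
  choose K hmin hupd using hstep
  have hstep' : ∀ t j, a (t + 1) j = if j = K t then a t j + 1 else a t j := by
    intro t j
    rw [hupd t]
    by_cases h : j = K t
    · subst h; simp
    · simp [Function.update_of_ne h, h]
  have hmono1 : ∀ j t, a t j ≤ a (t + 1) j := by
    intro j t; rw [hstep' t j]; split <;> omega
  have hmono : ∀ j, Monotone (fun t => a t j) := fun j => monotone_nat_of_le_succ (hmono1 j)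
  have hsum : ∀ t, ∑ j, a t j = t := by
    intro t
    induction t with
    | zero => simp [h0]
    | succ t ih =>
      have h1 : ∑ j, a (t + 1) j
          = (a t (K t) + 1) + ∑ j ∈ Finset.univ.erase (K t), a t j := by
        rw [hupd t, Finset.sum_update_of_mem (Finset.mem_univ _),
          Finset.sdiff_singleton_eq_erase]
      have h2 : a t (K t) + ∑ j ∈ Finset.univ.erase (K t), a t j = t := by
        rw [Finset.add_sum_erase _ _ (Finset.mem_univ (K t))]; exact ih
      omega
  obtain ⟨k0, -, hk0⟩ := Finset.exists_mem_eq_sup'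
    (⟨⟨0, hN⟩, Finset.mem_univ _⟩ : Finset.univ.Nonempty) (fun k => d k + (a m k : ℝ))
  rw [hk0]
  by_cases hc : a m k0 = 0
  · have h1 : d k0 + (a m k0 : ℝ) ≤ d k0 + (x k0 : ℝ) := by
      rw [hc]; push_cast; have : (0:ℝ) ≤ (x k0 : ℝ) := Nat.cast_nonneg _
      linarith
    exact h1.trans (Finset.le_sup' (fun k => d k + (x k : ℝ)) (Finset.mem_univ k0))
  · by_contra hlt
    push_neg at hlt
    have hxall : ∀ j, d j + (x j : ℝ) < d k0 + (a m k0 : ℝ) := fun j =>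
      lt_of_le_of_lt (Finset.le_sup' (fun k => d k + (x k : ℝ)) (Finset.mem_univ j)) hlt
    -- find the last step where k0's load increased
    have hex : ∃ t, ¬ a t k0 < a m k0 := ⟨m, lt_irrefl _⟩
    set t1 := Nat.find hex with ht1def
    have ht1 : ¬ a t1 k0 < a m k0 := Nat.find_spec hex
    have ht1le : t1 ≤ m := Nat.find_le (lt_irrefl _)
    have ht1pos : 0 < t1 := by
      rcases Nat.eq_zero_or_pos t1 with h | h
      · exfalso; apply ht1; rw [h, h0]; simpa using Nat.pos_of_ne_zero hc
      · exact h
    set t' := t1 - 1 with ht'def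
    have ht'succ : t' + 1 = t1 := by omega
    have ht'lt : a t' k0 < a m k0 := by
      by_contra h
      have h2 := Nat.find_min' hex h
      rw [← ht1def] at h2
      omega
    have hchange : a t' k0 < a (t' + 1) k0 := by
      have := ht1
      rw [← ht'succ] at this
      omega
    have hK : K t' = k0 := by
      by_contra h
      rw [hstep' t' k0, if_neg (fun hh => h hh.symm)] at hchange
      omega
    have heq : a m k0 = a t' k0 + 1 := by
      have h1 : a (t' + 1) k0 = a t' k0 + 1 := by rw [hstep' t' k0, if_pos hK.symm]
      have h2 : ¬ a (t' + 1) k0 < a m k0 := by rw [ht'succ]; exact ht1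
      omega
    have hkey : ∀ j, d k0 + (a t' k0 : ℝ) ≤ d j + (a m j : ℝ) := by
      intro j
      have h1 := hmin t' j
      rw [hK] at h1
      have h2 : (a t' j : ℝ) ≤ (a m j : ℝ) := by
        exact_mod_cast hmono j (by omega : t' ≤ m)
      linarith
    have hle : ∀ j, x j ≤ a m j := by
      intro j
      have h1 := hxall j
      have h2 := hkey j
      have h3 : (a m k0 : ℝ) = (a t' k0 : ℝ) + 1 := by exact_mod_cast heq
      have : (x j : ℝ) < (a m j : ℝ) + 1 := by linarith
      have h4 : (x j : ℝ) < ((a m j + 1 : ℕ) : ℝ) := by push_cast; linarith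
      have h5 : x j < a m j + 1 := by exact_mod_cast h4
      omega
    have hlt0 : x k0 < a m k0 := by
      have h1 := hxall k0
      have : (x k0 : ℝ) < (a m k0 : ℝ) := by linarith
      exact_mod_cast this
    have hsumlt : ∑ j, x j < ∑ j, a m j :=
      Finset.sum_lt_sum (fun j _ => hle j) ⟨k0, Finset.mem_univ _, hlt0⟩
    rw [hx, hsum m] at hsumlt
    exact lt_irrefl m hsumlt
end

section
/- In the min-max MGTSP lower-bound computation: for any feasible solution T = (T¹,...,T^{N_A}) whose induced task partition extends a partial assignment (G¹_S,...,G^{N_A}_S) (i.e. G^k_S ⊆ G^k for all k), if the cost function satisfies the triangle inequality, then c(T) ≥ max_k GTSP(G^k_S), where GTSP(G^k_S) is the optimal generalized TSP value for agent k over its assigned task groups G^k_S. -/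
/-- Triangle-inequality chain bound along a path. -/
lemma chain_le {V : Type*} (c : V → V → ℝ)
    (htri : ∀ u v w, c u w ≤ c u v + c v w) (T : ℕ → V) :
    ∀ a b, a < b → c (T a) (T b) ≤ ∑ i ∈ Finset.Ico a b, c (T i) (T (i+1)) := by
  intro a b hab
  induction b, hab using Nat.le_induction with
  | base =>
    rw [Finset.sum_Ico_succ_top (le_refl a)]
    simp
  | succ b hb ih =>
    rw [Finset.sum_Ico_succ_top (by omega)]
    calc c (T a) (T (b+1)) ≤ c (T a) (T b) + c (T b) (T (b+1)) := htri _ _ _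
    _ ≤ _ := by linarith

lemma periodic_sum (g : ℕ → ℝ) (p : ℕ) (hp : 0 < p) (hg : ∀ i, g (i + p) = g i) :
    ∀ a, ∑ i ∈ Finset.Ico a (a + p), g i = ∑ i ∈ Finset.Ico 0 p, g i := by
  intro a
  induction a with
  | zero => simp
  | succ a ih =>
    rw [← ih]
    have h1 : a + 1 + p = (a + p) + 1 := by omega
    rw [h1, Finset.sum_Ico_succ_top (by omega),
      Finset.sum_eq_sum_Ico_succ_bot (by omega : a < a + p), hg a]
    ring

lemma telescope_sum (g : ℕ → ℝ) (A : ℕ → ℕ) (hA : ∀ j, A j ≤ A (j+1)) :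
    ∀ t, ∑ j ∈ Finset.range t, ∑ i ∈ Finset.Ico (A j) (A (j+1)), g i
        = ∑ i ∈ Finset.Ico (A 0) (A t), g i := by
  have hm : Monotone A := monotone_nat_of_le_succ hA
  intro t
  induction t with
  | zero => simp
  | succ t ih =>
    rw [Finset.sum_range_succ, ih,
      Finset.sum_Ico_consecutive _ (hm (Nat.zero_le t)) (hA t)]

/-- Shortcutting a cyclic tour along a strictly monotone subsequence does not
increase its cost. -/
lemma shortcut {V : Type*} (c : V → V → ℝ)
    (htri : ∀ u v w, c u w ≤ c u v + c v w)
    {n s : ℕ} (T : Fin (n+1) → V) (f : Fin (s+1) → Fin (n+1)) (hf : StrictMono f) :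
    cycCost c (T ∘ f) ≤ cycCost c T := by
  set T' : ℕ → V := fun i => T ⟨i % (n+1), Nat.mod_lt _ n.succ_pos⟩ with hT'def
  set g : ℕ → ℝ := fun i => c (T' i) (T' (i+1)) with hgdef
  have hT' : ∀ i : Fin (n+1), T' i.val = T i := by
    intro i
    simp [hT'def, Nat.mod_eq_of_lt i.isLt]
  have hper : ∀ i, T' (i + (n+1)) = T' i := by
    intro i; simp [hT'def, Nat.add_mod_right]
  have hmodT' : ∀ i, T' (i % (n+1)) = T' i := by
    intro i; simp [hT'def]
  have hg : ∀ i, g (i + (n+1)) = g i := by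
    intro i
    have : i + (n+1) + 1 = (i+1) + (n+1) := by omega
    simp only [hgdef, this, hper]
  have hT'succ : ∀ i : Fin (n+1), T' (i.val + 1) = T (i + 1) := by
    intro i
    have hval : ((i+1 : Fin (n+1)) : ℕ) = (i.val + 1) % (n+1) := by
      rw [Fin.add_def]
      congr 1
      rw [Fin.val_one']
      conv_rhs => rw [Nat.add_mod, Nat.mod_eq_of_lt i.isLt]
    rw [← hT' (i+1), hval, hmodT']
  have hcycT : cycCost c T = ∑ i ∈ Finset.range (n+1), g i := by
    rw [cycCost, ← Fin.sum_univ_eq_sum_range (fun i => g i)]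
    apply Finset.sum_congr rfl
    intro i _
    have hi : g i.val = c (T' i.val) (T' (i.val + 1)) := rfl
    rw [hi, hT' i, hT'succ i]
  -- the breakpoints
  set A : ℕ → ℕ := fun j => if h : j < s + 1 then (f ⟨j, h⟩).val else (f 0).val + (n+1)
    with hAdef
  have hAstep : ∀ j, A j ≤ A (j+1) := by
    intro j
    by_cases h : j < s
    · have h1 : j < s + 1 := by omega
      have h2 : j + 1 < s + 1 := by omega
      simp only [hAdef, dif_pos h1, dif_pos h2]
      exact le_of_lt (hf (by simp [Fin.mk_lt_mk]))
    · by_cases h' : j < s + 1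
      · have h2 : ¬ (j + 1 < s + 1) := by omega
        simp only [hAdef, dif_pos h', dif_neg h2]
        have := (f ⟨j, h'⟩).isLt
        omega
      · have h1 : ¬ (j < s + 1) := by omega
        have h2 : ¬ (j + 1 < s + 1) := by omega
        simp only [hAdef, dif_neg h1, dif_neg h2, le_refl]
  have hAlt : ∀ j, j < s + 1 → A j < A (j+1) := by
    intro j hj
    by_cases h : j < s
    · have h1 : j < s + 1 := by omega
      have h2 : j + 1 < s + 1 := by omega
      simp only [hAdef, dif_pos h1, dif_pos h2]
      exact hf (by simp [Fin.mk_lt_mk])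
    · have h2 : ¬ (j + 1 < s + 1) := by omega
      simp only [hAdef, dif_pos hj, dif_neg h2]
      have := (f ⟨j, hj⟩).isLt
      have := (f 0).isLt
      omega
  have hA0 : A 0 = (f 0).val := by
    have h1 : (0:ℕ) < s + 1 := by omega
    have h0 : (⟨0, h1⟩ : Fin (s+1)) = 0 := by apply Fin.ext; simp
    simp only [hAdef, dif_pos h1, h0]
  have hAtop : A (s+1) = (f 0).val + (n+1) := by
    have h2 : ¬ (s + 1 < s + 1) := by omega
    simp only [hAdef, dif_neg h2]
  -- edge terms of the shortcut tour as a function on ℕ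
  set F : ℕ → ℝ := fun j =>
    if h : j < s + 1 then c ((T ∘ f) ⟨j, h⟩) ((T ∘ f) (⟨j, h⟩ + 1)) else 0 with hFdef
  have hcycTf : cycCost c (T ∘ f) = ∑ j ∈ Finset.range (s+1), F j := by
    rw [cycCost, ← Fin.sum_univ_eq_sum_range F]
    apply Finset.sum_congr rfl
    intro j _
    simp only [hFdef, dif_pos j.isLt, Fin.eta]
  -- pointwise bound
  have key : ∀ j ∈ Finset.range (s+1), F j ≤ ∑ i ∈ Finset.Ico (A j) (A (j+1)), g i := by
    intro j hj
    have hj' : j < s + 1 := Finset.mem_range.mp hj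
    have hleft : (T ∘ f) ⟨j, hj'⟩ = T' (A j) := by
      simp only [hAdef, dif_pos hj', Function.comp_apply, hT']
    have hright : (T ∘ f) (⟨j, hj'⟩ + 1) = T' (A (j+1)) := by
      by_cases h : j < s
      · have h2 : j + 1 < s + 1 := by omega
        have heq : (⟨j, hj'⟩ + 1 : Fin (s+1)) = ⟨j+1, h2⟩ := by
          apply Fin.ext
          simp [Fin.add_def, Nat.mod_eq_of_lt h2, Fin.val_one']
        rw [heq]
        simp only [hAdef, dif_pos h2, Function.comp_apply, hT']
      · have h' : j = s := by omega
        have heq : (⟨j, hj'⟩ + 1 : Fin (s+1)) = 0 := by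
          have hlast : (⟨j, hj'⟩ : Fin (s+1)) = Fin.last s := by
            apply Fin.ext; simp [h']
          rw [hlast, Fin.last_add_one]
        rw [heq, h', hAtop]
        simp only [Function.comp_apply, hper, hT']
    have hF : F j = c (T' (A j)) (T' (A (j+1))) := by
      simp only [hFdef, dif_pos hj', hleft, hright]
    rw [hF]
    exact chain_le c htri T' _ _ (hAlt j hj')
  calc cycCost c (T ∘ f)
      ≤ ∑ j ∈ Finset.range (s+1), ∑ i ∈ Finset.Ico (A j) (A (j+1)), g i := by
        rw [hcycTf]; exact Finset.sum_le_sum key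
    _ = ∑ i ∈ Finset.Ico (A 0) (A (s+1)), g i := telescope_sum g A hAstep (s+1)
    _ = ∑ i ∈ Finset.Ico 0 (n+1), g i := by
        rw [hA0, hAtop]
        exact periodic_sum g (n+1) n.succ_pos hg _
    _ = cycCost c T := by
        rw [hcycT, Finset.range_eq_Ico]

/-- Min-max MGTSP lower bound: if the cost satisfies the triangle inequality and,
for each agent `k`, its assigned partial cluster family (a subfamily, via the
injection `S k`, of its full cluster family `C k`) has optimal GTSP tour `Topt k`,
then for any feasible solution `T` whose tours cover the full cluster families,
`c(T) = max_k c(T^k) ≥ max_k GTSP(G^k_S)`. -/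
theorem stmt16 {V : Type*} (c : V → V → ℝ)
    (hsymm : ∀ u v, c u v = c v u) (hnonneg : ∀ u v, 0 ≤ c u v)
    (htri : ∀ u v w, c u w ≤ c u v + c v w)
    (NA : ℕ) (hNA : 0 < NA)
    (m mS : Fin NA → ℕ)
    (C : (k : Fin NA) → Fin (m k + 1) → Finset V)
    (S : (k : Fin NA) → Fin (mS k + 1) → Fin (m k + 1))
    (hS : ∀ k, Function.Injective (S k))
    (T : (k : Fin NA) → Fin (m k + 1) → V)
    (hT : ∀ k, IsGTour (C k) (T k))
    (Topt : (k : Fin NA) → Fin (mS k + 1) → V)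
    (hTopt : ∀ k, IsGTour (fun i => C k (S k i)) (Topt k))
    (hToptOpt : ∀ k p, IsGTour (fun i => C k (S k i)) p →
      cycCost c (Topt k) ≤ cycCost c p) :
    Finset.univ.sup' ⟨⟨0, hNA⟩, Finset.mem_univ _⟩ (fun k => cycCost c (Topt k)) ≤
      Finset.univ.sup' ⟨⟨0, hNA⟩, Finset.mem_univ _⟩ (fun k => cycCost c (T k)) := by
  have key : ∀ k, cycCost c (Topt k) ≤ cycCost c (T k) := by
    intro k
    obtain ⟨σ, hσ⟩ := hT k
    set g : Fin (mS k + 1) → Fin (m k + 1) := fun j => σ.symm (S k j) with hgdef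
    have hginj : Function.Injective g :=
      fun a b h => hS k (σ.symm.injective h)
    set s : Finset (Fin (m k + 1)) := Finset.univ.image g with hsdef
    have hcard : s.card = mS k + 1 := by
      rw [hsdef, Finset.card_image_of_injective _ hginj, Finset.card_univ,
        Fintype.card_fin]
    set f : Fin (mS k + 1) → Fin (m k + 1) :=
      fun j => (s.orderIsoOfFin hcard j : Fin (m k + 1)) with hfdef
    have hfmono : StrictMono f := by
      intro a b hab
      exact (s.orderIsoOfFin hcard).strictMono hab
    have hfmem : ∀ j, f j ∈ s := fun j => (s.orderIsoOfFin hcard j).2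
    have hex : ∀ j, ∃ j', g j' = f j := by
      intro j
      obtain ⟨j', _, hj'⟩ := Finset.mem_image.mp (hfmem j)
      exact ⟨j', hj'⟩
    choose π hπ using hex
    have hπinj : Function.Injective π := by
      intro a b h
      exact hfmono.injective (by rw [← hπ a, ← hπ b, h])
    have hπbij : Function.Bijective π := Finite.injective_iff_bijective.mp hπinj
    have htour : IsGTour (fun i => C k (S k i)) (T k ∘ f) := by
      refine ⟨Equiv.ofBijective π hπbij, fun j => ?_⟩
      have h1 : (T k ∘ f) j = T k (σ.symm (S k (π j))) := by
        simp only [Function.comp_apply, ← hπ j, hgdef]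
      rw [h1]
      have := hσ (σ.symm (S k (π j)))
      rwa [Equiv.apply_symm_apply] at this
    exact le_trans (hToptOpt k _ htour) (shortcut c htri (T k) f hfmono)
  apply Finset.sup'_le
  intro k _
  exact le_trans (key k) (Finset.le_sup' (fun k => cycCost c (T k)) (Finset.mem_univ k))
end
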